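/- arXiv:1703.10550 — 6 statements merged into one kernel-verified Lean document; each statement's English description precedes it below -/
import Mathlib

section
/- Let D₁, ..., Dₙ be caps on S^d with spherical radii α₁, ..., αₙ whose sum α = α₁ + ... + αₙ is at most π/2. Let uᵢ be the center of Dᵢ, set wᵢ := sin(αᵢ)·uᵢ and w := w₁ + ... + wₙ. If |w| ≥ sin α and |w − wᵢ| ≤ sin(α − αᵢ) for all i, then the cap centered at w/|w| with spherical radius α covers D₁ ∪ ... ∪ Dₙ. -/
/-!
A cap of radius `r` around a unit vector `u` is the set of unit vectors at angle at most `r`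
from `u`, so the statement follows from the triangle inequality for angles once the new
center `S / ‖S‖`, with `S = ∑ w j`, is shown to lie within angle `α - αᵢ` of each `uᵢ`.
Expanding `‖S - sin αᵢ • uᵢ‖² ≤ sin² (α - αᵢ)` bounds `⟪S, uᵢ⟫` from below by a quadratic in
`‖S‖`, and `‖S‖ ≥ sin α` puts `‖S‖` beyond the larger root of that quadratic.
-/

open Real RealInnerProductSpace

namespace InnerProductGeometry

variable {V : Type*} [NormedAddCommGroup V] [InnerProductSpace ℝ V]

theorem angle_le_iff_cos_mul_le_inner {x y : V} (hx : x ≠ 0) (hy : y ≠ 0) {β : ℝ}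
    (hβ₀ : 0 ≤ β) (hβπ : β ≤ π) :
    angle x y ≤ β ↔ cos β * (‖x‖ * ‖y‖) ≤ ⟪x, y⟫ := by
  rw [← cos_angle_mul_norm_mul_norm x y,
    mul_le_mul_iff_left₀ (by positivity : 0 < ‖x‖ * ‖y‖),
    strictAntiOn_cos.le_iff_ge ⟨hβ₀, hβπ⟩ ⟨angle_nonneg x y, angle_le_pi x y⟩]

theorem angle_le_iff_cos_le_inner_of_norm_eq_one {x y : V} (hx : ‖x‖ = 1) (hy : ‖y‖ = 1)
    {β : ℝ} (hβ₀ : 0 ≤ β) (hβπ : β ≤ π) :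
    angle x y ≤ β ↔ cos β ≤ ⟪x, y⟫ := by
  have hx₀ : x ≠ 0 := by rintro rfl; simp at hx
  have hy₀ : y ≠ 0 := by rintro rfl; simp at hy
  simpa [hx, hy] using angle_le_iff_cos_mul_le_inner hx₀ hy₀ hβ₀ hβπ

theorem norm_mul_cos_le_inner_of_norm_sub_sin_smul_le {S u : V} {β γ : ℝ} (hu : ‖u‖ = 1)
    (hsinβ : 0 < sin β) (hcosβ : 0 ≤ cos β) (hS : sin (β + γ) ≤ ‖S‖)
    (hSu : ‖S - sin β • u‖ ≤ sin γ) :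
    ‖S‖ * cos γ ≤ ⟪S, u⟫ := by
  have hsinγ : 0 ≤ sin γ := (norm_nonneg _).trans hSu
  have hexpand : ‖S - sin β • u‖ ^ 2 = ‖S‖ ^ 2 - 2 * sin β * ⟪S, u⟫ + sin β ^ 2 := by
    rw [norm_sub_sq_real, real_inner_smul_right, norm_smul, hu, norm_eq_abs, mul_one, sq_abs]
    ring
  have hsq : ‖S - sin β • u‖ ^ 2 ≤ sin γ ^ 2 := pow_le_pow_left₀ (norm_nonneg _) hSu 2
  -- `sin (β + γ)` and `2 sin β cos γ - sin (β + γ)` are the roots of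
  -- `N ↦ N² - 2 N sin β cos γ + sin² β - sin² γ`, and `‖S‖` is at least both of them.
  have hroots : sin (β + γ) * (2 * sin β * cos γ - sin (β + γ)) = sin β ^ 2 - sin γ ^ 2 := by
    rw [sin_add]
    linear_combination sin β ^ 2 * sin_sq_add_cos_sq γ - sin γ ^ 2 * sin_sq_add_cos_sq β
  have hquad : 0 ≤ ‖S‖ ^ 2 - 2 * sin β * cos γ * ‖S‖ + sin β ^ 2 - sin γ ^ 2 := by
    have hlow : 2 * sin β * cos γ - sin (β + γ) ≤ ‖S‖ := by
      rw [sin_add] at hS ⊢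
      nlinarith [mul_nonneg hcosβ hsinγ]
    nlinarith [mul_nonneg (sub_nonneg.2 hS) (sub_nonneg.2 hlow)]
  nlinarith

end InnerProductGeometry

open InnerProductGeometry

/-- Lemma 1 (first part) of the paper: caps `D i` on `S^d` have centers `u i` and
spherical radii `α i` with total radius `α ≤ π/2`.  With `w i := sin (α i) • u i`
and `w := ∑ w i`, if `‖w‖ ≥ sin α` and `‖w - w i‖ ≤ sin (α - α i)` for all `i`,
then the cap centered at `w / ‖w‖` of spherical radius `α` covers `⋃ D i`. -/
theorem cap_covers_caps
    (d n : ℕ) (u : Fin n → EuclideanSpace ℝ (Fin (d + 1))) (α : Fin n → ℝ)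
    (hu : ∀ i, ‖u i‖ = 1) (hα : ∀ i, 0 < α i) (hsum : ∑ i, α i ≤ π / 2)
    (w : Fin n → EuclideanSpace ℝ (Fin (d + 1)))
    (hw : ∀ i, w i = Real.sin (α i) • u i)
    (hnorm : Real.sin (∑ i, α i) ≤ ‖∑ i, w i‖)
    (hnear : ∀ i, ‖(∑ j, w j) - w i‖ ≤ Real.sin ((∑ j, α j) - α i)) :
    ∀ x : EuclideanSpace ℝ (Fin (d + 1)), ‖x‖ = 1 →
      (∃ i, Real.cos (α i) ≤ ⟪x, u i⟫) →
      Real.cos (∑ i, α i) ≤ ⟪x, ‖∑ i, w i‖⁻¹ • (∑ i, w i)⟫ := by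
  rintro x hx ⟨i, hxi⟩
  set A := ∑ j, α j
  set S := ∑ j, w j
  have hαi₀ : 0 < α i := hα i
  have hαi : α i ≤ A := Finset.single_le_sum (fun j _ => (hα j).le) (Finset.mem_univ i)
  have hS : S ≠ 0 := norm_pos_iff.1 <|
    (sin_pos_of_pos_of_lt_pi (hαi₀.trans_le hαi) (by linarith [pi_pos])).trans_le hnorm
  have hx_near : angle x (u i) ≤ α i :=
    (angle_le_iff_cos_le_inner_of_norm_eq_one hx (hu i) hαi₀.le (by linarith [pi_pos])).2 hxi
  have hS_near : angle S (u i) ≤ A - α i := by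
    refine (angle_le_iff_cos_mul_le_inner hS (by simp [← norm_ne_zero_iff, hu i])
      (by linarith) (by linarith [pi_pos])).2 ?_
    rw [hu i, mul_one, mul_comm]
    exact norm_mul_cos_le_inner_of_norm_sub_sin_smul_le (hu i)
      (sin_pos_of_pos_of_lt_pi hαi₀ (by linarith [pi_pos]))
      (cos_nonneg_of_mem_Icc ⟨by linarith, by linarith⟩)
      (by rwa [add_sub_cancel]) (hw i ▸ hnear i)
  have hxS : angle x (‖S‖⁻¹ • S) ≤ A := by
    rw [angle_smul_right_of_pos _ _ (inv_pos.2 (norm_pos_iff.2 hS))]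
    linarith [angle_le_angle_add_angle x (u i) S, angle_comm S (u i)]
  exact (angle_le_iff_cos_le_inner_of_norm_eq_one hx (norm_smul_inv_norm hS)
    (by linarith) (by linarith [pi_pos])).1 hxS
end

section
/- Let α₁, α₂ > 0 with α₁ + α₂ ≤ π/2, and let u₁, u₂ be unit vectors in ℝ^(d+1). Set w₁ := sin(α₁)·u₁, w₂ := sin(α₂)·u₂. If |w₁ + w₂| = sin(α₁ + α₂), then the angle between w₁ + w₂ and w₁ equals α₂, and the angle between w₁ + w₂ and w₂ equals α₁. -/
/-!
By the law of cosines in the triangle with sides `w₁`, `w₂`, `w₁ + w₂`, the cosine of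
`∠(w₁ + w₂, w₁)` is `(sin²(α₁ + α₂) + sin² α₁ - sin² α₂) / (2 sin(α₁ + α₂) sin α₁)`, and
the identity `sin²(a + b) - sin² b = sin a sin(a + 2b)` turns this into `cos α₂`.
-/

open Real RealInnerProductSpace InnerProductGeometry

theorem Real.sin_add_sq_add_sin_sq_sub_sin_sq (a b : ℝ) :
    sin (a + b) ^ 2 + sin a ^ 2 - sin b ^ 2 = 2 * sin (a + b) * sin a * cos b := by
  rw [sin_add]
  linear_combination sin b ^ 2 * sin_sq_add_cos_sq a - sin a ^ 2 * sin_sq_add_cos_sq b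

theorem InnerProductGeometry.angle_add_left_eq_of_norm_eq_sin
    {V : Type*} [NormedAddCommGroup V] [InnerProductSpace ℝ V] {x y : V} {α β : ℝ}
    (hx : ‖x‖ = sin α) (hy : ‖y‖ = sin β) (hxy : ‖x + y‖ = sin (α + β))
    (hx₀ : x ≠ 0) (hxy₀ : x + y ≠ 0) (hβ₀ : 0 ≤ β) (hβπ : β ≤ π) :
    angle (x + y) x = β := by
  have law_of_cosines := norm_sub_sq_eq_norm_sq_add_norm_sq_sub_two_mul_norm_mul_norm_mul_cos_angle
    (x + y) x
  rw [add_sub_cancel_left, hx, hy, hxy] at law_of_cosines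
  have hcos : 2 * sin (α + β) * sin α * cos (angle (x + y) x)
      = 2 * sin (α + β) * sin α * cos β := by
    rw [← sin_add_sq_add_sin_sq_sub_sin_sq]
    linarith
  have hne : 2 * sin (α + β) * sin α ≠ 0 := by
    rw [← hx, ← hxy]
    positivity
  exact injOn_cos ⟨angle_nonneg _ _, angle_le_pi _ _⟩ ⟨hβ₀, hβπ⟩
    (mul_left_cancel₀ hne hcos)

/-- Law-of-cosines computation from Lemma 2 of the paper: if `α₁, α₂ > 0` with
`α₁ + α₂ ≤ π/2`, `u₁, u₂` are unit vectors, `wᵢ = sin αᵢ • uᵢ` and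
`‖w₁ + w₂‖ = sin (α₁ + α₂)`, then `∠(w₁ + w₂, w₁) = α₂` and `∠(w₁ + w₂, w₂) = α₁`. -/
theorem angle_of_sum_of_cap_vectors
    (d : ℕ) (α₁ α₂ : ℝ) (hα₁ : 0 < α₁) (hα₂ : 0 < α₂) (hsum : α₁ + α₂ ≤ π / 2)
    (u₁ u₂ : EuclideanSpace ℝ (Fin (d + 1))) (hu₁ : ‖u₁‖ = 1) (hu₂ : ‖u₂‖ = 1)
    (hnorm : ‖Real.sin α₁ • u₁ + Real.sin α₂ • u₂‖ = Real.sin (α₁ + α₂)) :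
    InnerProductGeometry.angle (Real.sin α₁ • u₁ + Real.sin α₂ • u₂)
        (Real.sin α₁ • u₁) = α₂ ∧
    InnerProductGeometry.angle (Real.sin α₁ • u₁ + Real.sin α₂ • u₂)
        (Real.sin α₂ • u₂) = α₁ := by
  have hπ := pi_pos
  have hs₁ : 0 < sin α₁ := sin_pos_of_pos_of_lt_pi hα₁ (by linarith)
  have hs₂ : 0 < sin α₂ := sin_pos_of_pos_of_lt_pi hα₂ (by linarith)
  have hs : 0 < sin (α₁ + α₂) := sin_pos_of_pos_of_lt_pi (by linarith) (by linarith)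
  have hw₁ : ‖sin α₁ • u₁‖ = sin α₁ := by rw [norm_smul, hu₁, mul_one, norm_of_nonneg hs₁.le]
  have hw₂ : ‖sin α₂ • u₂‖ = sin α₂ := by rw [norm_smul, hu₂, mul_one, norm_of_nonneg hs₂.le]
  have hw₁₀ : sin α₁ • u₁ ≠ 0 := norm_pos_iff.mp (by rwa [hw₁])
  have hw₂₀ : sin α₂ • u₂ ≠ 0 := norm_pos_iff.mp (by rwa [hw₂])
  have hsum₀ : sin α₁ • u₁ + sin α₂ • u₂ ≠ 0 := norm_pos_iff.mp (by rwa [hnorm])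
  constructor
  · exact angle_add_left_eq_of_norm_eq_sin hw₁ hw₂ hnorm hw₁₀ hsum₀ hα₂.le (by linarith)
  · rw [add_comm (sin α₁ • u₁)] at hnorm hsum₀ ⊢
    rw [add_comm α₁] at hnorm
    exact angle_add_left_eq_of_norm_eq_sin hw₂ hw₁ hnorm hw₂₀ hsum₀ hα₁.le (by linarith)
end

section
/- Duality preserves containment of caps and zones: let u₁, u₂ ∈ S^d and r₁, r₂ ∈ (0, π/2). If the cap {x : ⟨x, u₁⟩ ≥ cos r₁} is contained in the cap {x : ⟨x, u₂⟩ ≥ cos r₂}, then the zone {x : |⟨x, u₁⟩| ≤ sin r₁} is contained in the zone {x : |⟨x, u₂⟩| ≤ sin r₂}. -/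
/-!
A unit vector `x` lies in the zone of half-width `r` about `u` exactly when its great sphere
`xᗮ` meets the cap of radius `r` about `u`: the normalized projection `z` of `u` onto `xᗮ`
satisfies `⟪z, u⟫ = √(1 - ⟪x, u⟫²)`, and conversely Bessel's inequality for the orthonormal
pair `x, z` gives `⟪x, u⟫² ≤ 1 - ⟪z, u⟫²`. Containment of caps therefore passes to zones.
-/

open Real RealInnerProductSpace

section

variable {E : Type*} [NormedAddCommGroup E] [InnerProductSpace ℝ E]

def sphericalCap (u : E) (r : ℝ) : Set E := {x | ‖x‖ = 1 ∧ cos r ≤ ⟪x, u⟫}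

def sphericalZone (u : E) (r : ℝ) : Set E := {x | ‖x‖ = 1 ∧ |⟪x, u⟫| ≤ sin r}

theorem inner_sq_add_inner_sq_le_norm_sq {x z : E} (hx : ‖x‖ = 1) (hz : ‖z‖ = 1)
    (hxz : ⟪x, z⟫ = 0) (u : E) : ⟪x, u⟫ ^ 2 + ⟪z, u⟫ ^ 2 ≤ ‖u‖ ^ 2 := by
  have hon : Orthonormal ℝ ![x, z] := by
    rw [orthonormal_iff_ite]
    intro i j
    fin_cases i <;> fin_cases j <;>
      simp [hx, hz, hxz, real_inner_comm x z]
  simpa [Fin.sum_univ_two] using hon.sum_inner_products_le u (s := Finset.univ)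

theorem exists_orthogonal_unit_inner_eq_sqrt {u x : E} (hu : ‖u‖ = 1)
    (hx : ‖x‖ = 1) (h : ⟪x, u⟫ ^ 2 < 1) :
    ∃ z, ‖z‖ = 1 ∧ ⟪x, z⟫ = 0 ∧ ⟪z, u⟫ = √(1 - ⟪x, u⟫ ^ 2) := by
  set w := u - ⟪x, u⟫ • x with hw_def
  have hxw : ⟪x, w⟫ = 0 := by
    rw [hw_def, inner_sub_right, real_inner_smul_right, real_inner_self_eq_norm_sq, hx]; ring
  have hwu : ⟪w, u⟫ = 1 - ⟪x, u⟫ ^ 2 := by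
    rw [hw_def, inner_sub_left, real_inner_smul_left, real_inner_self_eq_norm_sq, hu]; ring
  have hww : ‖w‖ ^ 2 = 1 - ⟪x, u⟫ ^ 2 := by
    rw [← hwu, ← real_inner_self_eq_norm_sq]
    nth_rw 2 [hw_def]
    rw [inner_sub_right, real_inner_smul_right, real_inner_comm x w, hxw, mul_zero, sub_zero]
  have hw0 : w ≠ 0 := by
    rw [← norm_pos_iff, ← Real.sqrt_sq (norm_nonneg w), hww]
    exact Real.sqrt_pos.2 (by linarith)
  refine ⟨‖w‖⁻¹ • w, norm_smul_inv_norm hw0, by simp [real_inner_smul_right, hxw], ?_⟩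
  rw [real_inner_smul_left, hwu, ← hww, Real.sqrt_sq (norm_nonneg w)]
  field_simp [norm_ne_zero_iff.2 hw0]

theorem mem_sphericalZone_iff_exists_mem_sphericalCap_inner_eq_zero {u x : E} (hu : ‖u‖ = 1)
    {r : ℝ} (hr : r ∈ Set.Ico 0 (π / 2)) :
    x ∈ sphericalZone u r ↔ ‖x‖ = 1 ∧ ∃ z ∈ sphericalCap u r, ⟪x, z⟫ = 0 := by
  have hcos : 0 ≤ cos r := cos_nonneg_of_mem_Icc ⟨by linarith [hr.1, pi_pos], hr.2.le⟩
  have hsin : 0 ≤ sin r := sin_nonneg_of_nonneg_of_le_pi hr.1 (by linarith [hr.2, pi_pos])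
  have hsin_sq : sin r ^ 2 = 1 - cos r ^ 2 := by rw [← sin_sq_add_cos_sq r]; ring
  constructor
  · rintro ⟨hx, hxu⟩
    have hsq : ⟪x, u⟫ ^ 2 ≤ sin r ^ 2 := sq_le_sq' (abs_le.1 hxu).1 (abs_le.1 hxu).2
    have hsin_lt : sin r < 1 := by
      simpa using sin_lt_sin_of_lt_of_le_pi_div_two (by linarith [hr.1, pi_pos]) le_rfl hr.2
    have hsin_sq_lt : sin r ^ 2 < 1 := by nlinarith
    obtain ⟨z, hz, hxz, hzu⟩ :=
      exists_orthogonal_unit_inner_eq_sqrt hu hx (hsq.trans_lt hsin_sq_lt)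
    refine ⟨hx, z, ⟨hz, ?_⟩, hxz⟩
    rw [hzu, Real.le_sqrt hcos (by linarith)]
    linarith
  · rintro ⟨hx, z, ⟨hz, hzu⟩, hxz⟩
    have hbessel := inner_sq_add_inner_sq_le_norm_sq hx hz hxz u
    have hcos_sq : cos r ^ 2 ≤ ⟪z, u⟫ ^ 2 := pow_le_pow_left₀ hcos hzu 2
    rw [hu] at hbessel
    exact ⟨hx, abs_le_of_sq_le_sq (by linarith) hsin⟩

theorem sphericalZone_subset_sphericalZone {u₁ u₂ : E} (hu₁ : ‖u₁‖ = 1) (hu₂ : ‖u₂‖ = 1)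
    {r₁ r₂ : ℝ} (hr₁ : r₁ ∈ Set.Ico 0 (π / 2)) (hr₂ : r₂ ∈ Set.Ico 0 (π / 2))
    (h : sphericalCap u₁ r₁ ⊆ sphericalCap u₂ r₂) :
    sphericalZone u₁ r₁ ⊆ sphericalZone u₂ r₂ := by
  intro x hx
  obtain ⟨hx, z, hz, hxz⟩ :=
    (mem_sphericalZone_iff_exists_mem_sphericalCap_inner_eq_zero hu₁ hr₁).1 hx
  exact (mem_sphericalZone_iff_exists_mem_sphericalCap_inner_eq_zero hu₂ hr₂).2 ⟨hx, z, h hz, hxz⟩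

end

/-- Duality preserves containment: if the cap of radius `r₁` centered at `u₁` is
contained in the cap of radius `r₂` centered at `u₂`, then the zone of half-width
`r₁` with axis `u₁` is contained in the zone of half-width `r₂` with axis `u₂`. -/
theorem duality_preserves_containment
    (d : ℕ) (u₁ u₂ : EuclideanSpace ℝ (Fin (d + 1)))
    (hu₁ : ‖u₁‖ = 1) (hu₂ : ‖u₂‖ = 1)
    (r₁ r₂ : ℝ) (hr₁ : 0 < r₁ ∧ r₁ < π / 2) (hr₂ : 0 < r₂ ∧ r₂ < π / 2)
    (hcap : ∀ x : EuclideanSpace ℝ (Fin (d + 1)), ‖x‖ = 1 →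
      Real.cos r₁ ≤ ⟪x, u₁⟫ → Real.cos r₂ ≤ ⟪x, u₂⟫) :
    ∀ x : EuclideanSpace ℝ (Fin (d + 1)), ‖x‖ = 1 →
      |⟪x, u₁⟫| ≤ Real.sin r₁ → |⟪x, u₂⟫| ≤ Real.sin r₂ := by
  have hsub : sphericalCap u₁ r₁ ⊆ sphericalCap u₂ r₂ := fun z hz => ⟨hz.1, hcap z hz.1 hz.2⟩
  intro x hx hxu
  exact (sphericalZone_subset_sphericalZone hu₁ hu₂ ⟨hr₁.1.le, hr₁.2⟩ ⟨hr₂.1.le, hr₂.2⟩ hsub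
    ⟨hx, hxu⟩).2
end

section
/- (Zone theorem on the circle) Let P₁, ..., Pₙ be zones on the unit circle S¹, where Pᵢ = {x ∈ S¹ : |⟨x, uᵢ⟩| ≤ sin αᵢ} for unit vectors uᵢ ∈ ℝ² and αᵢ ∈ (0, π/2). If S¹ ⊆ P₁ ∪ ... ∪ Pₙ, then α₁ + ... + αₙ ≥ π/2. -/
open Real RealInnerProductSpace

/-- Zone theorem on the circle: if the zones `{x ∈ S¹ : |⟪x, u i⟫| ≤ sin (α i)}`
with unit axes `u i` and half-widths `α i ∈ (0, π/2)` cover the unit circle, then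
`∑ α i ≥ π/2`. -/
theorem zone_theorem_on_circle
    (n : ℕ) (u : Fin n → EuclideanSpace ℝ (Fin 2)) (α : Fin n → ℝ)
    (hu : ∀ i, ‖u i‖ = 1) (hα : ∀ i, 0 < α i ∧ α i < π / 2)
    (hcover : ∀ x : EuclideanSpace ℝ (Fin 2), ‖x‖ = 1 →
      ∃ i, |⟪x, u i⟫| ≤ Real.sin (α i)) :
    π / 2 ≤ ∑ i, α i := by
  haveI : Fact (0 < π) := ⟨Real.pi_pos⟩
  -- each axis is (cos φ i, sin φ i)
  have hnorm : ∀ i, (u i 0) ^ 2 + (u i 1) ^ 2 = 1 := by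
    intro i
    have h := hu i
    rw [EuclideanSpace.norm_eq] at h
    have h2 : Real.sqrt ((u i 0) ^ 2 + (u i 1) ^ 2) = 1 := by
      simpa [Fin.sum_univ_two, Real.norm_eq_abs, sq_abs] using h
    have := congrArg (· ^ 2) h2
    simpa [Real.sq_sqrt (by positivity : (0:ℝ) ≤ (u i 0) ^ 2 + (u i 1) ^ 2)] using this
  set φ : Fin n → ℝ := fun i => Complex.arg ⟨u i 0, u i 1⟩ with hφdef
  have habs : ∀ i, ‖(⟨u i 0, u i 1⟩ : ℂ)‖ = 1 := by
    intro i
    rw [Complex.norm_def, Complex.normSq_mk]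
    rw [show u i 0 * u i 0 + u i 1 * u i 1 = (u i 0) ^ 2 + (u i 1) ^ 2 by ring, hnorm i]
    exact Real.sqrt_one
  have hne : ∀ i, (⟨u i 0, u i 1⟩ : ℂ) ≠ 0 := by
    intro i h
    have := habs i
    rw [h] at this
    simpa using this
  have hφc : ∀ i, Real.cos (φ i) = u i 0 := by
    intro i; rw [hφdef]; simp [Complex.cos_arg (hne i), habs i]
  have hφs : ∀ i, Real.sin (φ i) = u i 1 := by
    intro i; rw [hφdef]; simp [Complex.sin_arg, habs i]
  -- key pointwise claim: the closed balls of radius α i around φ i + π/2 cover AddCircle π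
  have key : ∀ t : ℝ, ∃ i,
      ((t : AddCircle π) ∈ Metric.closedBall ((φ i + π / 2 : ℝ) : AddCircle π) (α i)) := by
    intro t
    -- the point on the circle
    set x : EuclideanSpace ℝ (Fin 2) := !₂[Real.cos t, Real.sin t] with hx
    have hxnorm : ‖x‖ = 1 := by
      rw [EuclideanSpace.norm_eq]
      simp [hx, Fin.sum_univ_two, Real.norm_eq_abs, sq_abs, Real.sin_sq_add_cos_sq,
        Real.cos_sq_add_sin_sq]
    obtain ⟨i, hi⟩ := hcover x hxnorm
    have hinner : ⟪x, u i⟫ = Real.cos (t - φ i) := by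
      rw [PiLp.inner_apply, Fin.sum_univ_two, Real.cos_sub]
      simp [hx, ← hφc i, ← hφs i, RCLike.inner_apply, mul_comm]
    rw [hinner] at hi
    refine ⟨i, ?_⟩
    -- compute the distance on the circle
    set d : ℝ := t - (φ i + π / 2) with hd
    set k : ℤ := round (π⁻¹ * d) with hk
    set s : ℝ := d - k * π with hs
    have hsle : |s| ≤ π / 2 := by
      have h1 : |π⁻¹ * d - k| ≤ 1 / 2 := abs_sub_round _
      have h2 : s = π * (π⁻¹ * d - k) := by
        field_simp [hs]
        ring
      rw [h2, abs_mul, abs_of_pos Real.pi_pos]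
      nlinarith [Real.pi_pos]
    have hdist : dist ((t : AddCircle π)) ((φ i + π / 2 : ℝ) : AddCircle π) = |s| := by
      rw [dist_eq_norm]
      have : ((t : AddCircle π)) - ((φ i + π / 2 : ℝ) : AddCircle π) = ((d : ℝ) : AddCircle π) := by
        rw [hd, ← QuotientAddGroup.mk_sub]
      rw [this, AddCircle.norm_eq, ← hk, ← hs]
    -- |cos (t - φ i)| = sin |s|
    have hcos : |Real.cos (t - φ i)| = Real.sin |s| := by
      have ht : t - φ i = s + π / 2 + k * π := by rw [hs, hd]; ring
      have hsinabs : Real.sin |s| = |Real.sin s| := by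
        rcases abs_cases s with ⟨h, h0⟩ | ⟨h, h0⟩
        · have hsle' : s ≤ π := by linarith [Real.pi_pos, le_abs_self s]
          rw [h, abs_of_nonneg (Real.sin_nonneg_of_nonneg_of_le_pi h0 hsle')]
        · have h1 : 0 ≤ -s := by linarith
          have h2 : -s ≤ π := by
            have := hsle; rw [h] at this; linarith [Real.pi_pos]
          have h3 := Real.sin_nonneg_of_nonneg_of_le_pi h1 h2
          rw [Real.sin_neg] at h3
          rw [h, Real.sin_neg, abs_of_nonpos (by linarith)]
      rw [ht, hsinabs]
      have : Real.cos (s + π / 2 + k * π) = Real.cos (s + π / 2) * Real.cos (k * π)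
          - Real.sin (s + π / 2) * Real.sin (k * π) := Real.cos_add _ _
      rw [this, Real.sin_int_mul_pi, mul_zero, sub_zero, abs_mul, Real.cos_add_pi_div_two,
        abs_neg]
      have hck : |Real.cos ((k : ℝ) * π)| = 1 := by
        have h1 : Real.sin ((k : ℝ) * π) = 0 := Real.sin_int_mul_pi k
        have h2 := Real.sin_sq_add_cos_sq ((k : ℝ) * π)
        rw [h1] at h2
        nlinarith [abs_nonneg (Real.cos ((k : ℝ) * π)), sq_abs (Real.cos ((k : ℝ) * π))]
      rw [hck, mul_one]
    rw [hcos] at hi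
    -- conclude |s| ≤ α i
    rw [Metric.mem_closedBall, hdist]
    by_contra hgt
    push_neg at hgt
    have h1 : Real.sin (α i) < Real.sin |s| := by
      apply Real.strictMonoOn_sin
      · constructor <;> [linarith [(hα i).1, Real.pi_pos]; linarith [(hα i).2]]
      · constructor <;> [linarith [abs_nonneg s, Real.pi_pos]; exact hsle]
      · exact hgt
    linarith
  -- measure-theoretic conclusion
  have hsub : (Set.univ : Set (AddCircle π)) ⊆
      ⋃ i, Metric.closedBall ((φ i + π / 2 : ℝ) : AddCircle π) (α i) := by
    intro y _
    induction y using QuotientAddGroup.induction_on with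
    | H t =>
      obtain ⟨i, hi⟩ := key t
      exact Set.mem_iUnion.mpr ⟨i, hi⟩
  have hmeas : (ENNReal.ofReal π) ≤ ENNReal.ofReal (∑ i, 2 * α i) := by
    calc ENNReal.ofReal π = MeasureTheory.volume (Set.univ : Set (AddCircle π)) := by
          rw [AddCircle.measure_univ]
      _ ≤ MeasureTheory.volume (⋃ i, Metric.closedBall ((φ i + π / 2 : ℝ) : AddCircle π) (α i)) :=
          MeasureTheory.measure_mono hsub
      _ ≤ ∑ i, MeasureTheory.volume (Metric.closedBall ((φ i + π / 2 : ℝ) : AddCircle π) (α i)) :=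
          MeasureTheory.measure_iUnion_fintype_le _ _
      _ ≤ ∑ i, ENNReal.ofReal (2 * α i) := by
          apply Finset.sum_le_sum
          intro i _
          rw [AddCircle.volume_closedBall]
          exact ENNReal.ofReal_le_ofReal (min_le_right _ _)
      _ = ENNReal.ofReal (∑ i, 2 * α i) := by
          rw [ENNReal.ofReal_sum_of_nonneg]
          intro i _
          linarith [(hα i).1]
  have hfin : π ≤ ∑ i, 2 * α i := by
    have hnn : 0 ≤ ∑ i, 2 * α i := Finset.sum_nonneg fun i _ => by linarith [(hα i).1]
    exact (ENNReal.ofReal_le_ofReal_iff hnn).mp hmeas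
  rw [← Finset.mul_sum] at hfin
  linarith
end

section
/- Let α₁, α₂ > 0 with α₁ + α₂ < π/2, let u₁, u₂ be unit vectors in ℝ^(d+1), and suppose |sin(α₁)u₁ + sin(α₂)u₂| = sin(α₁ + α₂). Then the cap centered at (sin(α₁)u₁ + sin(α₂)u₂)/|sin(α₁)u₁ + sin(α₂)u₂| of spherical radius α₁ + α₂ covers both the cap of radius α₁ centered at u₁ and the cap of radius α₂ centered at u₂. -/
/-! The norm condition forces `⟪u₁, u₂⟫ = cos (α₁ + α₂)`, and then `w = sin α₁ • u₁ + sin α₂ • u₂`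
makes the angle `α₂` with `u₁` and the angle `α₁` with `u₂`. A point within angle `α₁` of `u₁` is
therefore within angle `α₁ + α₂` of `w` by the triangle inequality for angles, and symmetrically
for `u₂`. -/

open Real RealInnerProductSpace InnerProductGeometry

section

variable {V : Type*} [NormedAddCommGroup V] [InnerProductSpace ℝ V]

theorem cos_le_inner_iff_angle_le {x u : V} (hx : ‖x‖ = 1) (hu : ‖u‖ = 1) {r : ℝ}
    (hr₀ : 0 ≤ r) (hrπ : r ≤ π) : cos r ≤ ⟪x, u⟫ ↔ angle x u ≤ r := by
  rw [← strictAntiOn_cos.le_iff_ge ⟨hr₀, hrπ⟩ ⟨angle_nonneg x u, angle_le_pi x u⟩, cos_angle,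
    hx, hu, mul_one, div_one]

theorem inner_eq_cos_add_of_norm_sin_smul_add_eq {u₁ u₂ : V} (hu₁ : ‖u₁‖ = 1) (hu₂ : ‖u₂‖ = 1)
    {α₁ α₂ : ℝ} (hs₁ : sin α₁ ≠ 0) (hs₂ : sin α₂ ≠ 0)
    (hnorm : ‖sin α₁ • u₁ + sin α₂ • u₂‖ = sin (α₁ + α₂)) :
    ⟪u₁, u₂⟫ = cos (α₁ + α₂) := by
  -- `‖w‖² - sin² (α₁ + α₂) = 2 sin α₁ sin α₂ (⟪u₁, u₂⟫ - cos (α₁ + α₂))`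
  have hsq := congrArg (· ^ 2) hnorm
  simp only [norm_add_sq_real, norm_smul, real_inner_smul_left, real_inner_smul_right, hu₁, hu₂,
    norm_eq_abs, mul_one, sq_abs, sin_add] at hsq
  apply mul_left_cancel₀ (mul_ne_zero hs₁ hs₂)
  rw [cos_add]
  linear_combination
    (hsq + sin α₁ ^ 2 * sin_sq_add_cos_sq α₂ + sin α₂ ^ 2 * sin_sq_add_cos_sq α₁) / 2

theorem angle_sin_smul_add_sin_smul_eq {u₁ u₂ : V} (hu₁ : ‖u₁‖ = 1) {α₁ α₂ : ℝ}
    (hinner : ⟪u₁, u₂⟫ = cos (α₁ + α₂)) (hnorm : ‖sin α₁ • u₁ + sin α₂ • u₂‖ = sin (α₁ + α₂))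
    (hpos : 0 < sin (α₁ + α₂)) (hα₂ : 0 ≤ α₂) (hα₂π : α₂ ≤ π) :
    angle u₁ (sin α₁ • u₁ + sin α₂ • u₂) = α₂ := by
  have hsin₁ : sin α₁ = sin (α₁ + α₂) * cos α₂ - cos (α₁ + α₂) * sin α₂ := by
    rw [← sin_sub, add_sub_cancel_right]
  have hw : ⟪u₁, sin α₁ • u₁ + sin α₂ • u₂⟫ = sin (α₁ + α₂) * cos α₂ := by
    rw [inner_add_right, real_inner_smul_right, real_inner_smul_right, real_inner_self_eq_norm_sq,
      hu₁, hinner, hsin₁]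
    ring
  rw [angle, hw, hnorm, hu₁, one_mul, mul_div_cancel_left₀ _ hpos.ne', arccos_cos hα₂ hα₂π]

end

/-- If `α₁, α₂ > 0`, `α₁ + α₂ < π/2`, `u₁, u₂` are unit vectors and
`‖sin α₁ • u₁ + sin α₂ • u₂‖ = sin (α₁ + α₂)`, then the cap of spherical radius
`α₁ + α₂` centered at the normalization of `sin α₁ • u₁ + sin α₂ • u₂` covers both
the cap of radius `α₁` at `u₁` and the cap of radius `α₂` at `u₂`. -/
theorem two_caps_covered_by_one
    (d : ℕ) (α₁ α₂ : ℝ) (hα₁ : 0 < α₁) (hα₂ : 0 < α₂) (hsum : α₁ + α₂ < π / 2)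
    (u₁ u₂ : EuclideanSpace ℝ (Fin (d + 1))) (hu₁ : ‖u₁‖ = 1) (hu₂ : ‖u₂‖ = 1)
    (hnorm : ‖Real.sin α₁ • u₁ + Real.sin α₂ • u₂‖ = Real.sin (α₁ + α₂)) :
    ∀ x : EuclideanSpace ℝ (Fin (d + 1)), ‖x‖ = 1 →
      (Real.cos α₁ ≤ ⟪x, u₁⟫ ∨ Real.cos α₂ ≤ ⟪x, u₂⟫) →
      Real.cos (α₁ + α₂) ≤
        ⟪x, ‖Real.sin α₁ • u₁ + Real.sin α₂ • u₂‖⁻¹ •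
          (Real.sin α₁ • u₁ + Real.sin α₂ • u₂)⟫ := by
  have hπ := pi_pos
  have hpos : 0 < sin (α₁ + α₂) := sin_pos_of_pos_of_lt_pi (by linarith) (by linarith)
  have hinner : ⟪u₁, u₂⟫ = cos (α₁ + α₂) := inner_eq_cos_add_of_norm_sin_smul_add_eq hu₁ hu₂
    (sin_pos_of_pos_of_lt_pi hα₁ (by linarith)).ne'
    (sin_pos_of_pos_of_lt_pi hα₂ (by linarith)).ne' hnorm
  have hangle₁ : angle u₁ (sin α₁ • u₁ + sin α₂ • u₂) = α₂ :=
    angle_sin_smul_add_sin_smul_eq hu₁ hinner hnorm hpos hα₂.le (by linarith)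
  have hangle₂ : angle u₂ (sin α₁ • u₁ + sin α₂ • u₂) = α₁ := by
    rw [add_comm α₁ α₂, real_inner_comm] at hinner
    rw [add_comm α₁ α₂] at hpos
    rw [add_comm (sin α₁ • u₁), add_comm α₁ α₂] at hnorm
    rw [add_comm (sin α₁ • u₁)]
    exact angle_sin_smul_add_sin_smul_eq hu₂ hinner hnorm hpos hα₁.le (by linarith)
  set w := sin α₁ • u₁ + sin α₂ • u₂
  have hw₀ : w ≠ 0 := norm_pos_iff.mp (hnorm ▸ hpos)
  intro x hx hcap
  rw [cos_le_inner_iff_angle_le hx (by simpa using norm_smul_inv_norm (𝕜 := ℝ) hw₀)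
      (by linarith) (by linarith),
    angle_smul_right_of_pos _ _ (inv_pos.mpr (norm_pos_iff.mpr hw₀))]
  rcases hcap with hcap | hcap
  · rw [cos_le_inner_iff_angle_le hx hu₁ hα₁.le (by linarith)] at hcap
    calc angle x w ≤ angle x u₁ + angle u₁ w := angle_le_angle_add_angle x u₁ w
      _ ≤ α₁ + α₂ := by rw [hangle₁]; gcongr
  · rw [cos_le_inner_iff_angle_le hx hu₂ hα₂.le (by linarith)] at hcap
    calc angle x w ≤ angle x u₂ + angle u₂ w := angle_le_angle_add_angle x u₂ w
      _ ≤ α₁ + α₂ := by rw [hangle₂]; linarith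
end

section
/- If zones of total width strictly less than π are given on S^d (widths 2α₁, ..., 2αₙ with Σαᵢ < π/2, unit axes u₁, ..., uₙ, wᵢ := sin(αᵢ)uᵢ), and ε₁, ..., εₙ ∈ {±1} maximize |Σεᵢwᵢ| with the maximum value at most 1, then the point (Σεᵢwᵢ)/|Σεᵢwᵢ| of S^d lies in none of the zones, i.e., the zones do not cover S^d in this case. -/
open Real RealInnerProductSpace

/-! Flipping the sign `ε i` turns `W = ∑ ε j • w j` into `W - 2 ε i • w i`, whose squared norm is
`‖W‖² - 4 ε i ⟪W, w i⟫ + 4 ‖w i‖²`; maximality of `‖W‖` therefore forces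
`sin² αᵢ = ‖w i‖² ≤ |⟪W, w i⟫| = sin αᵢ |⟪W, u i⟫|`. Normalizing `W` multiplies the inner
products by `‖W‖⁻¹ ≥ 1`, strictly enlarging them when `‖W‖ < 1`. -/

section

variable {F : Type*} [NormedAddCommGroup F] [InnerProductSpace ℝ F]

theorem norm_sq_le_inner_of_norm_sub_two_smul_le {x v : F} (h : ‖x - (2 : ℝ) • v‖ ≤ ‖x‖) :
    ‖v‖ ^ 2 ≤ ⟪x, v⟫ := by
  have hsq := pow_le_pow_left₀ (norm_nonneg _) h 2
  rw [norm_sub_sq_real, norm_smul, real_inner_smul_right, mul_pow] at hsq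
  norm_num at hsq
  linarith

theorem Fintype.sum_update_smul {ι R M : Type*} [Fintype ι] [DecidableEq ι] [Ring R]
    [AddCommGroup M] [Module R M] (c : ι → R) (w : ι → M) (i : ι) (a : R) :
    ∑ j, Function.update c i a j • w j = ∑ j, c j • w j + (a - c i) • w i := by
  rw [Fintype.sum_eq_add_sum_compl i, Fintype.sum_eq_add_sum_compl i (fun j => c j • w j),
    Finset.sum_congr rfl fun j hj => by rw [Function.update_of_ne (by simpa using hj)],
    Function.update_self, sub_smul]
  abel

theorem norm_sq_le_abs_inner_of_maximal_signed_sum {ι : Type*} [Fintype ι] {w : ι → F}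
    {ε : ι → ℝ} (hε : ∀ i, ε i = 1 ∨ ε i = -1)
    (hmax : ∀ ε' : ι → ℝ, (∀ i, ε' i = 1 ∨ ε' i = -1) →
      ‖∑ i, ε' i • w i‖ ≤ ‖∑ i, ε i • w i‖) (i : ι) :
    ‖w i‖ ^ 2 ≤ |⟪∑ j, ε j • w j, w i⟫| := by
  classical
  have habs : |ε i| = 1 := by rcases hε i with h | h <;> simp [h]
  have hflip : ∀ j, Function.update ε i (-ε i) j = 1 ∨ Function.update ε i (-ε i) j = -1 := by
    intro j
    rcases eq_or_ne j i with rfl | hj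
    · rw [Function.update_self]; rcases hε j with h | h <;> simp [h]
    · rw [Function.update_of_ne hj]; exact hε j
  have hle := hmax _ hflip
  rw [Fintype.sum_update_smul, show (-ε i - ε i) • w i = -((2 : ℝ) • ε i • w i) by module,
    ← sub_eq_add_neg] at hle
  have key := norm_sq_le_inner_of_norm_sub_two_smul_le hle
  rw [norm_smul, Real.norm_eq_abs, habs, one_mul, real_inner_smul_right] at key
  calc ‖w i‖ ^ 2 ≤ ε i * ⟪∑ j, ε j • w j, w i⟫ := key
    _ ≤ |ε i * ⟪∑ j, ε j • w j, w i⟫| := le_abs_self _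
    _ = |⟪∑ j, ε j • w j, w i⟫| := by rw [abs_mul, habs, one_mul]

theorem abs_inner_le_abs_inner_inv_norm_smul {x : F} (hx : ‖x‖ ≤ 1) (u : F) :
    |⟪x, u⟫| ≤ |⟪‖x‖⁻¹ • x, u⟫| := by
  rw [real_inner_smul_left, abs_mul, abs_inv, abs_norm]
  rcases eq_or_ne x 0 with rfl | hx0
  · simp
  exact le_mul_of_one_le_left (abs_nonneg _) ((one_le_inv₀ (norm_pos_iff.2 hx0)).2 hx)

theorem abs_inner_lt_abs_inner_inv_norm_smul {x u : F} (hx : ‖x‖ < 1) (hxu : ⟪x, u⟫ ≠ 0) :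
    |⟪x, u⟫| < |⟪‖x‖⁻¹ • x, u⟫| := by
  have hx0 : x ≠ 0 := by rintro rfl; exact hxu (inner_zero_left u)
  rw [real_inner_smul_left, abs_mul, abs_inv, abs_norm]
  exact lt_mul_of_one_lt_left (abs_pos.2 hxu) ((one_lt_inv₀ (norm_pos_iff.2 hx0)).2 hx)

end

theorem maximal_signed_sum_escapes_zones_general
    (d n : ℕ) (u : Fin n → EuclideanSpace ℝ (Fin (d + 1))) (α : Fin n → ℝ)
    (hu : ∀ i, ‖u i‖ = 1) (hα : ∀ i, 0 < α i ∧ α i < π / 2)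
    (w : Fin n → EuclideanSpace ℝ (Fin (d + 1)))
    (hw : ∀ i, w i = Real.sin (α i) • u i)
    (ε : Fin n → ℝ) (hε : ∀ i, ε i = 1 ∨ ε i = -1)
    (hmax : ∀ ε' : Fin n → ℝ, (∀ i, ε' i = 1 ∨ ε' i = -1) →
      ‖∑ i, ε' i • w i‖ ≤ ‖∑ i, ε i • w i‖)
    (hle : ‖∑ i, ε i • w i‖ ≤ 1) :
    (∀ i, Real.sin (α i) ≤ |⟪‖∑ j, ε j • w j‖⁻¹ • ∑ j, ε j • w j, u i⟫|) ∧
    (‖∑ i, ε i • w i‖ < 1 →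
      ∀ i, Real.sin (α i) < |⟪‖∑ j, ε j • w j‖⁻¹ • ∑ j, ε j • w j, u i⟫|) := by
  have hsin (i : Fin n) : 0 < Real.sin (α i) :=
    Real.sin_pos_of_pos_of_lt_pi (hα i).1 (by linarith [(hα i).2, Real.pi_pos])
  have key (i : Fin n) : Real.sin (α i) ≤ |⟪∑ j, ε j • w j, u i⟫| := by
    have h := norm_sq_le_abs_inner_of_maximal_signed_sum hε hmax i
    rw [hw i, norm_smul, hu i, real_inner_smul_right, abs_mul, Real.norm_eq_abs,
      abs_of_pos (hsin i), mul_one, sq] at h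
    exact le_of_mul_le_mul_left h (hsin i)
  refine ⟨fun i => (key i).trans (abs_inner_le_abs_inner_inv_norm_smul hle _),
    fun hlt i => (key i).trans_lt (abs_inner_lt_abs_inner_inv_norm_smul hlt ?_)⟩
  exact abs_pos.1 ((hsin i).trans_le (key i))

/-- The escape point in the proof of the zone theorem: zones of half-widths
`α i ∈ (0, π/2)` with `∑ α i < π/2` and unit axes `u i` are given,
`w i := sin (α i) • u i`, and the signs `ε i ∈ {±1}` maximize `‖∑ ε i • w i‖`,
with `0 < ‖∑ ε i • w i‖ ≤ 1`.  Then the normalized point `w/‖w‖ ∈ S^d` lies in no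
open zone: `sin (α i) ≤ |⟪w/‖w‖, u i⟫|` for all `i`; moreover if `‖w‖ < 1` then
the inequality is strict for all `i`, so the point lies in none of the (closed)
zones and the zones do not cover `S^d`. -/
theorem maximal_signed_sum_escapes_zones
    (d n : ℕ) (u : Fin n → EuclideanSpace ℝ (Fin (d + 1))) (α : Fin n → ℝ)
    (hu : ∀ i, ‖u i‖ = 1) (hα : ∀ i, 0 < α i ∧ α i < π / 2)
    (hsum : ∑ i, α i < π / 2)
    (w : Fin n → EuclideanSpace ℝ (Fin (d + 1)))
    (hw : ∀ i, w i = Real.sin (α i) • u i)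
    (ε : Fin n → ℝ) (hε : ∀ i, ε i = 1 ∨ ε i = -1)
    (hmax : ∀ ε' : Fin n → ℝ, (∀ i, ε' i = 1 ∨ ε' i = -1) →
      ‖∑ i, ε' i • w i‖ ≤ ‖∑ i, ε i • w i‖)
    (hpos : 0 < ‖∑ i, ε i • w i‖) (hle : ‖∑ i, ε i • w i‖ ≤ 1) :
    (∀ i, Real.sin (α i) ≤ |⟪‖∑ j, ε j • w j‖⁻¹ • ∑ j, ε j • w j, u i⟫|) ∧
    (‖∑ i, ε i • w i‖ < 1 →
      ∀ i, Real.sin (α i) < |⟪‖∑ j, ε j • w j‖⁻¹ • ∑ j, ε j • w j, u i⟫|) :=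
  maximal_signed_sum_escapes_zones_general d n u α hu hα w hw ε hε hmax hle
end
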